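/- Let X ⊆ ℝ^d be a compact set with 0 ∉ conv(X), and suppose the unit ball of the source norm is rotund. Then the conical hull cone(X) = {λx : x ∈ X, λ > 0} is Capra-convex. -/

import Mathlib

open Classical in
noncomputable def radProj {d : ℕ} (N : EuclideanSpace ℝ (Fin d) → ℝ)
    (x : EuclideanSpace ℝ (Fin d)) : EuclideanSpace ℝ (Fin d) :=
  if x = 0 then 0 else (N x)⁻¹ • x

noncomputable def capraConj {d : ℕ} (N : EuclideanSpace ℝ (Fin d) → ℝ)
    (f : EuclideanSpace ℝ (Fin d) → EReal) (y : EuclideanSpace ℝ (Fin d)) : EReal :=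
  ⨆ x : EuclideanSpace ℝ (Fin d), ((inner ℝ (radProj N x) y : ℝ) : EReal) - f x

noncomputable def capraBiconj {d : ℕ} (N : EuclideanSpace ℝ (Fin d) → ℝ)
    (f : EuclideanSpace ℝ (Fin d) → EReal) (x : EuclideanSpace ℝ (Fin d)) : EReal :=
  ⨆ y : EuclideanSpace ℝ (Fin d), ((inner ℝ (radProj N x) y : ℝ) : EReal) - capraConj N f y

open Classical in
noncomputable def ind {d : ℕ} (X : Set (EuclideanSpace ℝ (Fin d)))
    (x : EuclideanSpace ℝ (Fin d)) : EReal :=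
  if x ∈ X then 0 else ⊤

def IsCapraConvex {d : ℕ} (N : EuclideanSpace ℝ (Fin d) → ℝ)
    (X : Set (EuclideanSpace ℝ (Fin d))) : Prop :=
  ind X = capraBiconj N (ind X)

def coneHull {d : ℕ} (A : Set (EuclideanSpace ℝ (Fin d))) : Set (EuclideanSpace ℝ (Fin d)) :=
  {y | ∃ a ∈ A, ∃ l : ℝ, 0 < l ∧ y = l • a}

/-!
Write `K = ρ(X)`. For every set `A`, the Capra conjugate of the indicator of `A` is the support
function of `ρ(A)`, and the Fenchel biconjugation of a support function gives back the closed
convex hull; so the Capra biconjugate of the indicator of `A` is the indicator of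
`ρ⁻¹(closedConvexHull ρ(A))`, and `cone X` is Capra-convex as soon as `ρ x ∈ conv K` forces
`x ∈ cone X`. Now `conv K` is compact and misses `0`, so `x ≠ 0` and `ρ x` is a unit vector; by
rotundity it is an extreme point of the unit ball, hence of `conv K ⊆ ball`, hence lies in `K`.
-/

open Set Function

section Convex

variable {E : Type*} [AddCommGroup E] [Module ℝ E]

theorem zero_mem_convexHull_of_zero_mem_convexHull_image {s : Set E} {f : E → E}
    (hf : ∀ a ∈ s, ∃ c : ℝ, 0 < c ∧ f a = c • a) (h₀ : 0 ∈ convexHull ℝ (f '' s)) :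
    0 ∈ convexHull ℝ s := by
  obtain ⟨ι, _, w, z, hw0, hw1, hz, hsum⟩ := mem_convexHull_iff_exists_fintype.1 h₀
  choose a ha hfa using hz
  choose c hc hca using fun i => hf (a i) (ha i)
  -- Multiplying the weights by `c` turns the combination of the `c i • a i` into one of the `a i`.
  have hpos : 0 < ∑ i, w i * c i := by
    obtain ⟨j, -, hj⟩ := Finset.exists_lt_of_sum_lt (show ∑ _ : ι, (0 : ℝ) < ∑ i, w i by simp [hw1])
    exact Finset.sum_pos' (fun i _ => mul_nonneg (hw0 i) (hc i).le)
      ⟨j, Finset.mem_univ j, mul_pos hj (hc j)⟩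
  have hcm : Finset.univ.centerMass (fun i => w i * c i) a = 0 := by
    simp only [Finset.centerMass, mul_smul, ← hca, hfa, hsum, smul_zero]
  rw [← hcm]
  exact Finset.centerMass_mem_convexHull _ (fun i _ => mul_nonneg (hw0 i) (hc i).le) hpos
    fun i _ => ha i

theorem mem_of_mem_convexHull_of_mem_extremePoints {K B : Set E} (hKB : K ⊆ B) (hB : Convex ℝ B)
    {u : E} (hu : u ∈ B.extremePoints ℝ) (huK : u ∈ convexHull ℝ K) : u ∈ K :=
  extremePoints_convexHull_subset <|
    inter_extremePoints_subset_extremePoints_of_subset (convexHull_min hKB hB) ⟨huK, hu⟩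

theorem convexOn_univ_of_subadditive_of_abs_homogeneous {N : E → ℝ}
    (hNh : ∀ (a : ℝ) (x : E), N (a • x) = |a| * N x) (hNt : ∀ x y : E, N (x + y) ≤ N x + N y) :
    ConvexOn ℝ univ N :=
  ⟨convex_univ, fun x _ y _ a b ha hb _ => by
    simpa only [hNh, abs_of_nonneg ha, abs_of_nonneg hb, smul_eq_mul] using hNt (a • x) (b • y)⟩

theorem nonneg_of_subadditive_of_abs_homogeneous {N : E → ℝ}
    (hNh : ∀ (a : ℝ) (x : E), N (a • x) = |a| * N x) (hNt : ∀ x y : E, N (x + y) ≤ N x + N y)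
    (x : E) : 0 ≤ N x := by
  have h0 : N 0 = 0 := by simpa using hNh 0 0
  have hneg : N (-x) = N x := by simpa using hNh (-1) x
  have h := hNt x (-x)
  rw [add_neg_cancel, h0, hneg] at h
  linarith

end Convex

section ConvexHull

variable {E : Type*} [NormedAddCommGroup E] [NormedSpace ℝ E] [FiniteDimensional ℝ E]

theorem IsCompact.convexHull {K : Set E} (hK : IsCompact K) : IsCompact (convexHull ℝ K) := by
  rcases K.eq_empty_or_nonempty with rfl | ⟨k₀, hk₀⟩
  · simp
  set n := Module.finrank ℝ E + 1
  let f : (Fin n → ℝ) × (Fin n → E) → E := fun p => ∑ i, p.1 i • p.2 i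
  suffices _root_.convexHull ℝ K = f '' (stdSimplex ℝ (Fin n) ×ˢ univ.pi fun _ => K) by
    rw [this]
    exact ((isCompact_stdSimplex ℝ (Fin n)).prod (isCompact_univ_pi fun _ => hK)).image
      (by fun_prop)
  refine Subset.antisymm (fun x hx => ?_) ?_
  · -- Carathéodory: `x` is a convex combination of at most `n` points of `K`; pad with zeros.
    obtain ⟨ι, _, z, w, hzK, hz, hw0, hw1, rfl⟩ := eq_pos_convex_span_of_mem_convexHull hx
    have hcard : Fintype.card ι ≤ Fintype.card (Fin n) := by
      simpa [n] using hz.card_le_finrank_succ.trans (by gcongr; exact Submodule.finrank_le _)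
    obtain ⟨e⟩ := Function.Embedding.nonempty_of_card_le hcard
    let W := extend e w 0
    let Z := extend e z fun _ => k₀
    have hW (j : ι) : W (e j) = w j := e.injective.extend_apply ..
    have hZ (j : ι) : Z (e j) = z j := e.injective.extend_apply ..
    have hW₀ (i : Fin n) (hi : i ∉ range e) : W i = 0 := extend_apply' _ _ _ hi
    have hZ₀ (i : Fin n) (hi : i ∉ range e) : Z i = k₀ := extend_apply' _ _ _ hi
    have cases (P : Fin n → Prop) (h₁ : ∀ j, P (e j)) (h₀ : ∀ i ∉ range e, P i) (i) : P i := by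
      by_cases hi : i ∈ range e
      · obtain ⟨j, rfl⟩ := hi; exact h₁ j
      · exact h₀ i hi
    refine ⟨(W, Z), ⟨⟨cases (0 ≤ W ·) (fun j => ?_) (fun i hi => ?_), ?_⟩,
      fun i _ => cases (Z · ∈ K) (fun j => ?_) (fun i hi => ?_) i⟩, ?_⟩
    · rw [hW]; exact (hw0 j).le
    · rw [hW₀ i hi]
    · rw [← hw1]
      exact (Fintype.sum_of_injective e e.injective w W hW₀ fun j => (hW j).symm).symm
    · rw [hZ]; exact hzK (mem_range_self j)
    · rw [hZ₀ i hi]; exact hk₀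
    · exact (Fintype.sum_of_injective e e.injective _ (fun i => W i • Z i)
        (fun i hi => by simp [hW₀ i hi]) fun j => by simp [hW, hZ]).symm
  · rintro _ ⟨⟨w, z⟩, ⟨hw, hz⟩, rfl⟩
    exact mem_convexHull_of_exists_fintype w z hw.1 hw.2 (fun i => hz i (mem_univ i)) rfl

end ConvexHull

section SupportFunction

variable {E : Type*} [NormedAddCommGroup E] [InnerProductSpace ℝ E]

noncomputable def supportFun (S : Set E) (y : E) : EReal :=
  ⨆ u ∈ S, ((inner ℝ u y : ℝ) : EReal)

theorem inner_le_supportFun_of_mem_closedConvexHull {S : Set E} {p : E}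
    (hp : p ∈ closedConvexHull ℝ S) (y : E) : ((inner ℝ p y : ℝ) : EReal) ≤ supportFun S y := by
  let T := ⋂ (r : ℝ) (_ : supportFun S y < r), {q : E | inner ℝ q y ≤ r}
  have hST : S ⊆ T := fun u hu => mem_iInter₂.2 fun r hr =>
    EReal.coe_le_coe_iff.1 ((le_biSup (fun u => ((inner ℝ u y : ℝ) : EReal)) hu).trans hr.le)
  have hT : Convex ℝ T := convex_iInter₂ fun r _ =>
    convex_halfSpace_le ((innerₛₗ ℝ (E := E)).flip y).isLinear r
  have hpT : p ∈ T := closedConvexHull_min hST hT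
    (isClosed_biInter fun r _ => isClosed_le (by fun_prop) continuous_const) hp
  exact EReal.le_of_forall_lt_iff_le.1 fun r hr => EReal.coe_le_coe_iff.2 (mem_iInter₂.1 hpT r hr)

variable [CompleteSpace E]

theorem iSup_inner_sub_supportFun_eq_top {S : Set E} {p : E} (hp : p ∉ closedConvexHull ℝ S) :
    ⨆ y, ((inner ℝ p y : ℝ) : EReal) - supportFun S y = ⊤ := by
  obtain ⟨f, v, hfS, hfp⟩ := geometric_hahn_banach_closed_point convex_closedConvexHull
    isClosed_closedConvexHull hp
  set z := (InnerProductSpace.toDual ℝ E).symm f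
  have hz (q : E) : inner ℝ q z = f q := by
    rw [real_inner_comm]; exact InnerProductSpace.toDual_symm_apply
  -- Along the ray spanned by the separating functional the gap grows linearly.
  have hgap (t : ℝ) (ht : 0 ≤ t) :
      ((t * (f p - v) : ℝ) : EReal) ≤ ((inner ℝ p (t • z) : ℝ) : EReal) - supportFun S (t • z) := by
    have hsupp : supportFun S (t • z) ≤ ((t * v : ℝ) : EReal) := iSup₂_le fun u hu => by
      rw [real_inner_smul_right, hz]
      exact EReal.coe_le_coe_iff.2 (mul_le_mul_of_nonneg_left
        (hfS u (subset_closedConvexHull hu)).le ht)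
    calc ((t * (f p - v) : ℝ) : EReal) = ((t * f p : ℝ) : EReal) - ((t * v : ℝ) : EReal) := by
          rw [← EReal.coe_sub, mul_sub]
      _ ≤ _ := by
          rw [real_inner_smul_right, hz]
          exact EReal.sub_le_sub le_rfl hsupp
  refine (EReal.eq_top_iff_forall_lt _).2 fun r => ?_
  obtain ⟨t, ht⟩ := exists_nat_gt (r / (f p - v))
  have hr : r < t * (f p - v) := (div_lt_iff₀ (sub_pos.2 hfp)).1 ht
  exact (EReal.coe_lt_coe_iff.2 hr).trans_le ((hgap t t.cast_nonneg).trans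
    (le_iSup (fun y => ((inner ℝ p y : ℝ) : EReal) - supportFun S y) _))

open Classical in
theorem iSup_inner_sub_supportFun (S : Set E) (p : E) :
    ⨆ y, ((inner ℝ p y : ℝ) : EReal) - supportFun S y =
      if p ∈ closedConvexHull ℝ S then 0 else ⊤ := by
  split_ifs with hp
  · refine le_antisymm (iSup_le fun y => EReal.sub_nonpos.2
      (inner_le_supportFun_of_mem_closedConvexHull hp y)) (le_iSup_of_le 0 ?_)
    have : supportFun S 0 ≤ 0 := iSup₂_le fun u _ => by simp
    simpa using this
  · exact iSup_inner_sub_supportFun_eq_top hp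

end SupportFunction

section Capra

variable {d : ℕ} (N : EuclideanSpace ℝ (Fin d) → ℝ)

theorem capraConj_ind (A : Set (EuclideanSpace ℝ (Fin d))) :
    capraConj N (ind A) = supportFun (radProj N '' A) := by
  funext y
  rw [supportFun, iSup_image]
  refine le_antisymm (iSup_le fun x => ?_) (iSup₂_le fun x hx => le_iSup_of_le x ?_)
  · by_cases hx : x ∈ A
    · simpa [ind, hx] using le_biSup (fun x => ((inner ℝ (radProj N x) y : ℝ) : EReal)) hx
    · simp [ind, hx]
  · simp [ind, hx]

theorem capraBiconj_ind (A : Set (EuclideanSpace ℝ (Fin d))) :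
    capraBiconj N (ind A) = ind (radProj N ⁻¹' closedConvexHull ℝ (radProj N '' A)) := by
  funext x
  rw [capraBiconj, capraConj_ind, iSup_inner_sub_supportFun]
  rfl

theorem ind_injective : Injective (ind (d := d)) := fun A B h => by
  ext x
  have := congrFun h x
  by_cases hA : x ∈ A <;> by_cases hB : x ∈ B <;> simp_all [ind]

theorem isCapraConvex_iff (A : Set (EuclideanSpace ℝ (Fin d))) :
    IsCapraConvex N A ↔ radProj N ⁻¹' closedConvexHull ℝ (radProj N '' A) ⊆ A := by
  rw [IsCapraConvex, capraBiconj_ind, ind_injective.eq_iff]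
  exact ⟨fun h => h.symm.subset, fun h => (h.antisymm
    fun x hx => subset_closedConvexHull (mem_image_of_mem _ hx)).symm⟩

end Capra

section RadialProjection

variable {d : ℕ} {N : EuclideanSpace ℝ (Fin d) → ℝ}

theorem radProj_smul_of_pos (hNh : ∀ (a : ℝ) (x : EuclideanSpace ℝ (Fin d)), N (a • x) = |a| * N x)
    {l : ℝ} (hl : 0 < l) (x : EuclideanSpace ℝ (Fin d)) : radProj N (l • x) = radProj N x := by
  by_cases hx : x = 0
  · simp [radProj, hx]
  · simp only [radProj, smul_eq_zero, hl.ne', hx, or_self, if_false, hNh, abs_of_pos hl, smul_smul,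
      mul_inv_rev]
    rw [mul_assoc, inv_mul_cancel₀ hl.ne', mul_one]

theorem smul_radProj_self {x : EuclideanSpace ℝ (Fin d)} (hx : N x ≠ 0) :
    N x • radProj N x = x := by
  by_cases hx0 : x = 0
  · simp [radProj, hx0]
  · simp [radProj, hx0, smul_smul, hx]

theorem radProj_eq_of_ne_zero {x : EuclideanSpace ℝ (Fin d)} (hx : x ≠ 0) :
    radProj N x = (N x)⁻¹ • x := if_neg hx

theorem apply_radProj_eq_one
    (hNh : ∀ (a : ℝ) (x : EuclideanSpace ℝ (Fin d)), N (a • x) = |a| * N x)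
    {x : EuclideanSpace ℝ (Fin d)} (hx : x ≠ 0) (hNx : 0 < N x) : N (radProj N x) = 1 := by
  rw [radProj_eq_of_ne_zero hx, hNh, abs_of_pos (inv_pos.2 hNx), inv_mul_cancel₀ hNx.ne']

theorem continuousOn_radProj (hN : Continuous N) (hN0 : ∀ x, x ≠ 0 → N x ≠ 0) :
    ContinuousOn (radProj N) {0}ᶜ :=
  ((hN.continuousOn.inv₀ hN0).smul continuousOn_id).congr fun _ hx => radProj_eq_of_ne_zero hx

theorem radProj_image_coneHull
    (hNh : ∀ (a : ℝ) (x : EuclideanSpace ℝ (Fin d)), N (a • x) = |a| * N x)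
    (X : Set (EuclideanSpace ℝ (Fin d))) : radProj N '' coneHull X = radProj N '' X := by
  refine Subset.antisymm ?_ (image_mono fun a ha => ⟨a, ha, 1, one_pos, (one_smul ℝ a).symm⟩)
  rintro _ ⟨_, ⟨a, ha, l, hl, rfl⟩, rfl⟩
  exact ⟨a, ha, (radProj_smul_of_pos hNh hl a).symm⟩

end RadialProjection

theorem stmt {d : ℕ} (N : EuclideanSpace ℝ (Fin d) → ℝ)
    (hN0 : ∀ x : EuclideanSpace ℝ (Fin d), N x = 0 ↔ x = 0)
    (hNh : ∀ (a : ℝ) (x : EuclideanSpace ℝ (Fin d)), N (a • x) = |a| * N x)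
    (hNt : ∀ x y : EuclideanSpace ℝ (Fin d), N (x + y) ≤ N x + N y)
    (hrot : ∀ x : EuclideanSpace ℝ (Fin d), N x = 1 → x ∈ Set.extremePoints ℝ {y : EuclideanSpace ℝ (Fin d) | N y ≤ 1})
    (X : Set (EuclideanSpace ℝ (Fin d))) (hX : IsCompact X)
    (h0 : (0 : EuclideanSpace ℝ (Fin d)) ∉ convexHull ℝ X) :
    IsCapraConvex N (coneHull X) := by
  have hconvex := convexOn_univ_of_subadditive_of_abs_homogeneous hNh hNt
  have hpos (x) (hx : x ≠ 0) : 0 < N x :=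
    (nonneg_of_subadditive_of_abs_homogeneous hNh hNt x).lt_of_ne' (mt (hN0 x).1 hx)
  have hX0 : X ⊆ {0}ᶜ := fun a ha (h : a = 0) => h0 (subset_convexHull ℝ X (h ▸ ha))
  set K := radProj N '' X
  have hNcont : Continuous N := continuousOn_univ.1 (hconvex.continuousOn isOpen_univ)
  have hK : IsCompact K := hX.image_of_continuousOn <|
    (continuousOn_radProj hNcont fun x hx => (hpos x hx).ne').mono hX0
  have h0K : (0 : EuclideanSpace ℝ (Fin d)) ∉ convexHull ℝ K := fun h => h0 <|
    zero_mem_convexHull_of_zero_mem_convexHull_image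
      (fun a ha => ⟨_, inv_pos.2 (hpos a (hX0 ha)), radProj_eq_of_ne_zero (hX0 ha)⟩) h
  rw [isCapraConvex_iff, radProj_image_coneHull hNh,
    closedConvexHull_eq_closure_convexHull, hK.convexHull.isClosed.closure_eq]
  intro x hx
  have hx0 : x ≠ 0 := by rintro rfl; exact h0K (by simpa [radProj] using hx)
  obtain ⟨a, ha, hax⟩ : radProj N x ∈ K :=
    mem_of_mem_convexHull_of_mem_extremePoints
      (by rintro _ ⟨a, ha, rfl⟩; exact (apply_radProj_eq_one hNh (hX0 ha) (hpos a (hX0 ha))).le)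
      (by simpa using hconvex.convex_le 1) (hrot _ (apply_radProj_eq_one hNh hx0 (hpos x hx0)))
      hx
  refine ⟨a, ha, N x / N a, div_pos (hpos x hx0) (hpos a (hX0 ha)), ?_⟩
  calc x = N x • radProj N x := (smul_radProj_self (hpos x hx0).ne').symm
    _ = (N x / N a) • a := by rw [← hax, radProj_eq_of_ne_zero (hX0 ha), smul_smul, div_eq_mul_inv]
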